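/- Let N ≥ 1, μ ∈ ℝ^N, and Σ a positive definite N×N real matrix, and set λ = −(Γ(N/2 + 2) / √(det(2πΣ)))^{2/(2+N)}. Then ∫_{ℝ^N} max(−λ − (1/2)(t−μ)ᵀΣ⁻¹(t−μ), 0) dt = 1. -/

import Mathlib

/-!
Translating by `μ` and substituting `t = Σ^{1/2} x`, whose Jacobian is `√(det Σ)`, turns the
quadratic form into `‖x‖²`; polar coordinates then reduce the integral with `a = -λ` to
`∫₀^{√(2a)} r^{N-1} (a - r²/2) dr`, and the whole integral equals
`√(det Σ) (2π)^{N/2} a^{N/2+1} / Γ(N/2 + 2)`. The value of `λ` is exactly the one making this `1`.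
-/

open Real Matrix
open scoped MatrixOrder
open MeasureTheory Set

theorem Real.sqrt_pow {x : ℝ} (hx : 0 ≤ x) (n : ℕ) : √(x ^ n) = √x ^ n := by
  rw [Real.sqrt_eq_iff_eq_sq (by positivity) (by positivity), ← pow_mul, mul_comm n, pow_mul,
    Real.sq_sqrt hx]

theorem integral_pow_mul_max_sub_half_sq (k : ℕ) {a : ℝ} (ha : 0 < a) :
    ∫ y in Ioi (0 : ℝ), y ^ k * max (a - 1 / 2 * y ^ 2) 0 =
      2 * a * √(2 * a) ^ (k + 1) / ((k + 1) * (k + 3)) := by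
  set R := √(2 * a)
  have hR : 0 < R := Real.sqrt_pos.mpr (by linarith)
  have hR2 : R ^ 2 = 2 * a := Real.sq_sqrt (by linarith)
  have hsupp : ∀ y ∈ Ioi (0 : ℝ), y ^ k * max (a - 1 / 2 * y ^ 2) 0 =
      (Ioc 0 R).indicator (fun y ↦ a * y ^ k - y ^ (k + 2) / 2) y := by
    intro y hy
    have hy : 0 < y := hy
    by_cases hyR : y ≤ R
    · rw [indicator_of_mem (show y ∈ Ioc 0 R from ⟨hy, hyR⟩), max_eq_left (by nlinarith)]
      ring
    · rw [indicator_of_notMem fun h ↦ hyR h.2, max_eq_right (by nlinarith), mul_zero]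
  rw [setIntegral_congr_fun measurableSet_Ioi hsupp, integral_indicator measurableSet_Ioc,
    Measure.restrict_restrict measurableSet_Ioc, inter_eq_left.mpr Ioc_subset_Ioi_self,
    ← intervalIntegral.integral_of_le hR.le, intervalIntegral.integral_sub
      (Continuous.intervalIntegrable (by fun_prop) _ _)
      (Continuous.intervalIntegrable (by fun_prop) _ _),
    intervalIntegral.integral_const_mul, intervalIntegral.integral_div, integral_pow, integral_pow]
  have hR3 : R ^ (k + 3) = 2 * a * R ^ (k + 1) := by rw [← hR2]; ring
  rw [hR3]
  push_cast
  field_simp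
  ring

section InnerProductSpace

variable {E : Type*} [NormedAddCommGroup E] [InnerProductSpace ℝ E] [FiniteDimensional ℝ E]
  [MeasurableSpace E] [BorelSpace E] [Nontrivial E]

theorem integral_max_sub_half_norm_sq {a : ℝ} (ha : 0 < a) :
    ∫ x : E, max (a - 1 / 2 * ‖x‖ ^ 2) 0 =
      √(2 * π) ^ Module.finrank ℝ E * a ^ ((Module.finrank ℝ E : ℝ) / 2 + 1) /
        Gamma ((Module.finrank ℝ E : ℝ) / 2 + 2) := by
  have hball : volume.real (Metric.ball (0 : E) 1) =
      √π ^ Module.finrank ℝ E / Gamma (Module.finrank ℝ E / 2 + 1) := by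
    rw [measureReal_def, InnerProductSpace.volume_ball, ENNReal.ofReal_one, one_pow, one_mul,
      ENNReal.toReal_ofReal (by positivity)]
  rw [integral_fun_norm_addHaar volume (fun r ↦ max (a - 1 / 2 * r ^ 2) 0), hball]
  simp only [nsmul_eq_mul, smul_eq_mul]
  obtain ⟨k, hk⟩ : ∃ k, Module.finrank ℝ E = k + 1 :=
    Nat.exists_eq_add_one.mpr Module.finrank_pos
  rw [hk, Nat.add_sub_cancel, integral_pow_mul_max_sub_half_sq k ha]
  have hGamma : Gamma ((k + 1 : ℕ) / 2 + 2 : ℝ) =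
      ((k + 1 : ℕ) / 2 + 1) * Gamma ((k + 1 : ℕ) / 2 + 1) := by
    rw [← Real.Gamma_add_one (by positivity)]
    ring_nf
  have hpow : a ^ (((k + 1 : ℕ) : ℝ) / 2 + 1) = √a ^ (k + 1) * a := by
    rw [Real.rpow_add ha, Real.rpow_one, Real.rpow_div_two_eq_sqrt _ ha.le, Real.rpow_natCast]
  rw [hGamma, hpow, Real.sqrt_mul (by norm_num), Real.sqrt_mul (by norm_num), mul_pow, mul_pow]
  have := Real.Gamma_pos_of_pos (show (0 : ℝ) < (k + 1 : ℕ) / 2 + 1 by positivity)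
  push_cast
  field_simp
  ring

end InnerProductSpace

section Matrix

variable {ι : Type*} [Fintype ι]

theorem integral_dotProduct_self_eq_integral_norm_sq (g : ℝ → ℝ) :
    ∫ x : ι → ℝ, g (x ⬝ᵥ x) = ∫ x : EuclideanSpace ℝ ι, g (‖x‖ ^ 2) := by
  rw [← (PiLp.volume_preserving_toLp ι).integral_comp
    (MeasurableEquiv.toLp 2 (ι → ℝ)).measurableEmbedding]
  congr 1 with x
  rw [← real_inner_self_eq_norm_sq, EuclideanSpace.inner_toLp_toLp, star_trivial]

variable [DecidableEq ι]

theorem Matrix.integral_comp_mulVec {F : Type*} [NormedAddCommGroup F] [NormedSpace ℝ F]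
    {B : Matrix ι ι ℝ} (hB : B.det ≠ 0) (f : (ι → ℝ) → F) :
    ∫ x, f (B *ᵥ x) = |B.det|⁻¹ • ∫ t, f t := by
  let L := (B.toLinearEquiv' (B.invertibleOfIsUnitDet hB.isUnit)).toContinuousLinearEquiv
  have h := L.toHomeomorph.measurableEmbedding.integral_map (μ := volume) f
  rw [show ⇑L.toHomeomorph = toLin' B from rfl, Real.map_matrix_volume_pi_eq_smul_volume_pi hB,
    integral_smul_measure, ENNReal.toReal_ofReal (abs_nonneg _), abs_inv] at h
  simpa only [toLin'_apply] using h.symm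

theorem Matrix.PosDef.sqrt_mulVec_dotProduct_inv_mulVec {C : Matrix ι ι ℝ} (hC : C.PosDef)
    (x : ι → ℝ) : (CFC.sqrt C *ᵥ x) ⬝ᵥ C⁻¹ *ᵥ (CFC.sqrt C *ᵥ x) = x ⬝ᵥ x := by
  set B := CFC.sqrt C
  have hBB : B * B = C := CFC.sqrt_mul_sqrt_self C hC.posSemidef.nonneg
  have hBsymm : Bᵀ = B := by simpa using (CFC.sqrt_nonneg C).posSemidef.isHermitian.eq
  have hCsymm : Cᵀ = C := by simpa using hC.isHermitian.eq
  have hB : IsUnit B.det := by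
    rw [hC.posSemidef.det_sqrt]
    simpa using (Real.sqrt_pos.mpr hC.det_pos).ne'
  have hBCB : B * C⁻¹ * B = 1 := by
    rw [← hBB, Matrix.mul_inv_rev, Matrix.mul_assoc, Matrix.nonsing_inv_mul_cancel_right _ _ hB,
      Matrix.mul_nonsing_inv _ hB]
  rw [mulVec_mulVec, dotProduct_comm, dotProduct_mulVec, ← vecMul_transpose, vecMul_vecMul,
    transpose_mul, transpose_nonsing_inv, hBsymm, hCsymm, hBCB, vecMul_one]

theorem Matrix.PosDef.integral_comp_dotProduct_inv_mulVec {C : Matrix ι ι ℝ} (hC : C.PosDef)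
    (g : ℝ → ℝ) :
    ∫ t, g (t ⬝ᵥ C⁻¹ *ᵥ t) = √C.det * ∫ x : EuclideanSpace ℝ ι, g (‖x‖ ^ 2) := by
  have hdet : (CFC.sqrt C).det = √C.det := by simpa using hC.posSemidef.det_sqrt
  have hsqrt : 0 < √C.det := Real.sqrt_pos.mpr hC.det_pos
  have h := (CFC.sqrt C).integral_comp_mulVec (hdet ▸ hsqrt.ne') fun t ↦ g (t ⬝ᵥ C⁻¹ *ᵥ t)
  simp only [hC.sqrt_mulVec_dotProduct_inv_mulVec, hdet, abs_of_pos hsqrt, smul_eq_mul,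
    integral_dotProduct_self_eq_integral_norm_sq] at h
  rw [h, mul_inv_cancel_left₀ hsqrt.ne']

end Matrix

/-- The multivariate truncated paraboloid density normalizes to 1 with
`λ = −(Γ(N/2 + 2) / √(det(2πΣ)))^(2/(2+N))`. -/
theorem stmt_11 (N : ℕ) (hN : 1 ≤ N) (μ : Fin N → ℝ)
    (C : Matrix (Fin N) (Fin N) ℝ) (hC : C.PosDef)
    (lam : ℝ)
    (hlam : lam = -(Real.Gamma ((N : ℝ) / 2 + 2) /
      Real.sqrt (((2 * Real.pi) • C).det)) ^ (2 / ((2 : ℝ) + N))) :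
    (∫ t : Fin N → ℝ,
      max (-lam - (1 / 2) * ((t - μ) ⬝ᵥ C⁻¹.mulVec (t - μ))) 0) = 1 := by
  have : Nonempty (Fin N) := Fin.pos_iff_nonempty.mp hN
  have hdet : ((2 * π) • C).det = (2 * π) ^ N * C.det := by rw [det_smul, Fintype.card_fin]
  set G := Gamma ((N : ℝ) / 2 + 2)
  have hG : 0 < G := Real.Gamma_pos_of_pos (by positivity)
  set K := G / √(((2 * π) • C).det)
  have hK : 0 < K := div_pos hG (Real.sqrt_pos.mpr (hdet ▸ mul_pos (by positivity) hC.det_pos))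
  set a := K ^ (2 / ((2 : ℝ) + N))
  have ha : 0 < a := Real.rpow_pos_of_pos hK _
  have haK : a ^ ((N : ℝ) / 2 + 1) = K := by
    rw [← Real.rpow_mul hK.le, show 2 / ((2 : ℝ) + N) * (N / 2 + 1) = 1 by field_simp; ring,
      Real.rpow_one]
  calc ∫ t, max (-lam - 1 / 2 * ((t - μ) ⬝ᵥ C⁻¹ *ᵥ (t - μ))) 0
      = ∫ t, max (a - 1 / 2 * (t ⬝ᵥ C⁻¹ *ᵥ t)) 0 := by
        rw [hlam, neg_neg]
        exact integral_sub_right_eq_self (fun t ↦ max (a - 1 / 2 * (t ⬝ᵥ C⁻¹ *ᵥ t)) 0) μ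
    _ = √C.det * ∫ x : EuclideanSpace ℝ (Fin N), max (a - 1 / 2 * ‖x‖ ^ 2) 0 :=
        hC.integral_comp_dotProduct_inv_mulVec fun q ↦ max (a - 1 / 2 * q) 0
    _ = √C.det * (√(2 * π) ^ N * K / G) := by
        rw [integral_max_sub_half_norm_sq ha, finrank_euclideanSpace_fin, haK]
    _ = 1 := by
        have hCdet : 0 < √C.det := Real.sqrt_pos.mpr hC.det_pos
        rw [show K = G / (√(2 * π) ^ N * √C.det) by
          rw [← Real.sqrt_pow (by positivity), ← Real.sqrt_mul (by positivity), ← hdet]]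
        field_simp
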